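/- Let ℍ be the Hilbert cube, and let H ⊆ K(ℍ²) be the set of compact subsets of ℍ × ℍ that are graphs of homeomorphisms between compact subsets of ℍ. Then H is a Borel subset of K(ℍ²). -/

import Mathlib

open TopologicalSpace MeasureTheory

attribute [local instance] PiCountable.metricSpace

/-- The Hilbert cube `[0,1]^ℕ`. -/
abbrev Hcube : Type := ℕ → unitInterval

noncomputable local instance : MeasurableSpace Hcube := borel Hcube
local instance : BorelSpace Hcube := ⟨rfl⟩
noncomputable local instance : MeasurableSpace (NonemptyCompacts (Hcube × Hcube)) :=
  borel _
local instance : BorelSpace (NonemptyCompacts (Hcube × Hcube)) := ⟨rfl⟩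

/-- `C ⊆ ℍ × ℍ` is the graph of a homeomorphism between compact subsets of `ℍ`. -/
def IsHomeoGraph (C : Set (Hcube × Hcube)) : Prop :=
  ∃ K L : Set Hcube, IsCompact K ∧ IsCompact L ∧ ∃ φ : K ≃ₜ L,
    C = Set.range fun k : K => ((k : Hcube), (φ k : Hcube))

/-!
A compact `C ⊆ ℍ × ℍ` is such a graph exactly when both coordinate projections are injective
on `C`: the inverse of a continuous bijection from a compact space onto a Hausdorff space is
continuous. A continuous map `f` fails to be injective on `C` iff `C × C` meets one of the closed
sets `{(p, q) | f p = f q ∧ 1/(n+1) ≤ dist p q}`, and in the Vietoris topology the compact sets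
meeting a closed set form a closed set. So non-injectivity is `F_σ`, injectivity is `G_δ`, and the
set of graphs is an intersection of two `G_δ` sets.
-/

namespace TopologicalSpace.NonemptyCompacts

theorem isClosed_setOf_exists_mem_mem {X : Type*} [TopologicalSpace X] {S : Set (X × X)}
    (hS : IsClosed S) :
    IsClosed {C : NonemptyCompacts X | ∃ p ∈ C, ∃ q ∈ C, (p, q) ∈ S} := by
  have hsq : Continuous fun C : NonemptyCompacts X => C ×ˢ C :=
    continuous_prod.comp (continuous_id.prodMk continuous_id)
  convert (isClosed_inter_nonempty_of_isClosed hS).preimage hsq using 1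
  ext C
  simp [Set.Nonempty, ← SetLike.mem_coe, NonemptyCompacts.coe_prod, and_assoc]

theorem measurableSet_setOf_injOn {X Z : Type*} [MetricSpace X] [TopologicalSpace Z]
    [T2Space Z] [MeasurableSpace (NonemptyCompacts X)]
    [OpensMeasurableSpace (NonemptyCompacts X)] {f : X → Z} (hf : Continuous f) :
    MeasurableSet {C : NonemptyCompacts X | Set.InjOn f C} := by
  have hsep (n : ℕ) :
      IsClosed {pq : X × X | f pq.1 = f pq.2 ∧ 1 / (n + 1 : ℝ) ≤ dist pq.1 pq.2} :=
    (isClosed_eq (hf.comp continuous_fst) (hf.comp continuous_snd)).inter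
      (isClosed_le continuous_const continuous_dist)
  have hcompl : {C : NonemptyCompacts X | Set.InjOn f C}ᶜ =
      ⋃ n : ℕ, {C | ∃ p ∈ C, ∃ q ∈ C, f p = f q ∧ 1 / (n + 1 : ℝ) ≤ dist p q} := by
    ext C
    simp only [Set.mem_compl_iff, Set.mem_ofPred_eq, Set.mem_iUnion, Set.InjOn, not_forall]
    constructor
    · rintro ⟨p, hp, q, hq, hfpq, hne⟩
      obtain ⟨n, hn⟩ := exists_nat_one_div_lt (dist_pos.mpr hne)
      exact ⟨n, p, hp, q, hq, hfpq, hn.le⟩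
    · rintro ⟨n, p, hp, q, hq, hfpq, hn⟩
      refine ⟨p, hp, q, hq, hfpq, fun hpq => ?_⟩
      rw [hpq, dist_self] at hn
      exact hn.not_gt Nat.one_div_pos_of_nat
  rw [← MeasurableSet.compl_iff, hcompl]
  exact .iUnion fun n => (isClosed_setOf_exists_mem_mem (hsep n)).measurableSet

end TopologicalSpace.NonemptyCompacts

theorem isHomeoGraph_iff_injOn {C : Set (Hcube × Hcube)} (hC : IsCompact C) :
    IsHomeoGraph C ↔ Set.InjOn Prod.fst C ∧ Set.InjOn Prod.snd C := by
  constructor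
  · rintro ⟨K, L, -, -, φ, rfl⟩
    exact ⟨Function.Injective.injOn_range fun k k' h => Subtype.ext h,
      Function.Injective.injOn_range fun k k' h => φ.injective (Subtype.ext h)⟩
  · rintro ⟨hfst, hsnd⟩
    have : CompactSpace C := isCompact_iff_compactSpace.mp hC
    let e₁ : C ≃ₜ (Prod.fst '' C : Set Hcube) :=
      (continuous_fst.comp continuous_subtype_val).subtype_mk _ |>.homeoOfEquivCompactToT2
        (f := Equiv.Set.imageOfInjOn _ _ hfst)
    let e₂ : C ≃ₜ (Prod.snd '' C : Set Hcube) :=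
      (continuous_snd.comp continuous_subtype_val).subtype_mk _ |>.homeoOfEquivCompactToT2
        (f := Equiv.Set.imageOfInjOn _ _ hsnd)
    refine ⟨_, _, hC.image continuous_fst, hC.image continuous_snd, e₁.symm.trans e₂, ?_⟩
    rw [← e₁.surjective.range_comp]
    conv_lhs => rw [← Subtype.range_coe (s := C)]
    congr 1
    funext c
    change (c : Hcube × Hcube) = ((c : Hcube × Hcube).1, (e₂ (e₁.symm (e₁ c)) : Hcube))
    rw [e₁.symm_apply_apply]
    rfl

/-- The set of compact subsets of `ℍ × ℍ` that are graphs of homeomorphisms between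
compact subsets of `ℍ` is a Borel subset of `K(ℍ²)`. -/
theorem isHomeoGraph_measurableSet :
    MeasurableSet {C : NonemptyCompacts (Hcube × Hcube) |
      IsHomeoGraph (C : Set (Hcube × Hcube))} := by
  have hset : {C : NonemptyCompacts (Hcube × Hcube) | IsHomeoGraph (C : Set (Hcube × Hcube))} =
      {C : NonemptyCompacts _ | Set.InjOn Prod.fst (C : Set (Hcube × Hcube))} ∩
        {C : NonemptyCompacts _ | Set.InjOn Prod.snd (C : Set (Hcube × Hcube))} :=
    Set.ext fun C : NonemptyCompacts _ => isHomeoGraph_iff_injOn C.isCompact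
  rw [hset]
  exact (NonemptyCompacts.measurableSet_setOf_injOn continuous_fst).inter
    (NonemptyCompacts.measurableSet_setOf_injOn continuous_snd)
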